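/- For every t > 0 the function Q_t g is Lipschitz on X, with Lipschitz constant Lip(Q_t g) ≤ √(2 Osc(g)/t). -/

import Mathlib

/-!
Setting: `(X, d)` is a length metric space and `g : X → ℝ` is lower semicontinuous and
bounded.  `Q_t g(x) := inf_y (g(y) + d(x,y)²/(2t))` for `t > 0`, `Q_0 g := g`, and
`Osc(g) := sup g - inf g`.
-/

open Filter Topology Metric

noncomputable section

/-- A metric space is a *length space* if the distance between any two points equals the
infimum of the lengths (total variations) of continuous curves joining them. -/
def IsLengthSpace (X : Type*) [MetricSpace X] : Prop :=
  ∀ x y : X,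
    ENNReal.ofReal (dist x y) =
      ⨅ γ : { γ : ℝ → X // ContinuousOn γ (Set.Icc 0 1) ∧ γ 0 = x ∧ γ 1 = y },
        eVariationOn γ.1 (Set.Icc 0 1)

variable {X : Type*} [MetricSpace X]

/-- The Hopf–Lax semigroup `Q_t g(x) = inf_y (g(y) + d(x,y)²/(2t))`, with `Q_0 g = g`. -/
def QHL (g : X → ℝ) (t : ℝ) (x : X) : ℝ :=
  if t = 0 then g x else ⨅ y : X, (g y + dist x y ^ 2 / (2 * t))

/-- The oscillation `Osc(g) = sup g - inf g`. -/
def Osc (g : X → ℝ) : ℝ :=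
  sSup (Set.range g) - sInf (Set.range g)

/-!
Fix `z` and put `K = √(2 Osc(g) / t)`. A point `y` with `d(z,y) > K t` has
`d(z,y)² / 2t > Osc(g) ≥ g(z) - g(y)`, so it competes worse than `y = z` in the infimum defining
`Q_t g(z)`; for the remaining `y`, expanding `(d(x,z) + d(z,y))²` gives
`Q_t g(x) ≤ Q_t g(z) + K d(x,z) + d(x,z)² / 2t`. The quadratic error term is negligible at small
scales, so summing this estimate along a chain of small steps that follows an almost shortest
curve from `x` to `z` yields the Lipschitz bound `K d(x,z)`.
-/

theorem IsLengthSpace.exists_chain {Y : Type*} [MetricSpace Y] (hY : IsLengthSpace Y)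
    (x z : Y) {ε : ℝ} (hε : 0 < ε) :
    ∃ (n : ℕ) (p : ℕ → Y), p 0 = x ∧ p n = z ∧ (∀ i < n, dist (p i) (p (i + 1)) < ε) ∧
      ∑ i ∈ Finset.range n, dist (p i) (p (i + 1)) < dist x z + ε := by
  have hlt : (⨅ γ : { γ : ℝ → Y // ContinuousOn γ (Set.Icc 0 1) ∧ γ 0 = x ∧ γ 1 = z },
      eVariationOn γ.1 (Set.Icc 0 1)) < ENNReal.ofReal (dist x z + ε) := by
    rw [← hY x z]
    exact (ENNReal.ofReal_lt_ofReal_iff (by positivity)).mpr (by linarith)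
  obtain ⟨⟨γ, hγc, rfl, rfl⟩, hγ⟩ := iInf_lt_iff.mp hlt
  obtain ⟨η, hη, hγη⟩ := Metric.uniformContinuousOn_iff.mp
    (isCompact_Icc.uniformContinuousOn_of_continuous hγc) ε hε
  obtain ⟨n, hn⟩ := exists_nat_gt (1 / η)
  have hn0 : (0 : ℝ) < n := lt_trans (by positivity) hn
  set u : ℕ → ℝ := fun i => i / n
  have hu : ∀ i ∈ Set.Icc 0 n, u i ∈ Set.Icc (0 : ℝ) 1 := fun i hi =>
    ⟨by positivity, div_le_one_of_le₀ (by exact_mod_cast hi.2) hn0.le⟩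
  have hu_mono : MonotoneOn u (Set.Icc 0 n) := fun i _ j _ hij => by
    simp only [u]; gcongr
  refine ⟨n, γ ∘ u, by simp [u], by simp [u, hn0.ne'], fun i hi => ?_, ?_⟩
  · refine hγη _ (hu i ⟨i.zero_le, hi.le⟩) _ (hu (i + 1) ⟨(i + 1).zero_le, hi⟩) ?_
    rw [Real.dist_eq, abs_lt]
    have hstep : u (i + 1) - u i = 1 / n := by simp only [u]; push_cast; ring
    have : 1 / (n : ℝ) < η := by rwa [div_lt_comm₀ hn0 hη]
    have : 0 < 1 / (n : ℝ) := by positivity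
    constructor <;> linarith
  · have hsum : ENNReal.ofReal (∑ i ∈ Finset.range n, dist ((γ ∘ u) i) ((γ ∘ u) (i + 1)))
        ≤ eVariationOn γ (Set.Icc 0 1) := by
      rw [ENNReal.ofReal_sum_of_nonneg fun _ _ => dist_nonneg, Finset.range_eq_Ico]
      refine (Finset.sum_congr rfl fun i _ => ?_).trans_le
        (eVariationOn.sum_le_of_monotoneOn_Icc hu_mono hu)
      rw [edist_dist, dist_comm, Function.comp_apply, Function.comp_apply]
    exact (ENNReal.ofReal_lt_ofReal_iff (by positivity)).mp (hsum.trans_lt hγ)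

theorem IsLengthSpace.lipschitzWith_of_sub_le {Y : Type*} [MetricSpace Y]
    (hY : IsLengthSpace Y) {f : Y → ℝ} {K : NNReal} {C : ℝ} (hC : 0 ≤ C)
    (hf : ∀ x z, f x - f z ≤ K * dist x z + C * dist x z ^ 2) : LipschitzWith K f := by
  have hstep : ∀ {x z ε}, dist x z < ε → dist (f x) (f z) ≤ (K + C * ε) * dist x z := by
    intro x z ε hxz
    have hsq : C * dist x z ^ 2 ≤ C * ε * dist x z := by
      rw [sq, ← mul_assoc]; gcongr
    have h₁ := hf x z
    have h₂ := hf z x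
    rw [dist_comm z x] at h₂
    rw [Real.dist_eq, abs_le]
    constructor <;> linarith
  refine LipschitzWith.of_dist_le_mul fun x z => ?_
  have hε : ∀ ε > 0, dist (f x) (f z) ≤ (K + C * ε) * (dist x z + ε) := by
    intro ε hε
    obtain ⟨n, p, rfl, rfl, hp, hsum⟩ := hY.exists_chain x z hε
    calc dist (f (p 0)) (f (p n))
        ≤ ∑ i ∈ Finset.range n, dist (f (p i)) (f (p (i + 1))) :=
          dist_le_range_sum_dist (f ∘ p) n
      _ ≤ ∑ i ∈ Finset.range n, (K + C * ε) * dist (p i) (p (i + 1)) :=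
          Finset.sum_le_sum fun i hi => hstep (hp i (Finset.mem_range.mp hi))
      _ = (K + C * ε) * ∑ i ∈ Finset.range n, dist (p i) (p (i + 1)) :=
          (Finset.mul_sum _ _ _).symm
      _ ≤ (K + C * ε) * (dist (p 0) (p n) + ε) := by gcongr
  have hlim : Tendsto (fun ε => (K + C * ε) * (dist x z + ε)) (𝓝[>] 0)
      (𝓝 ((K + C * 0) * (dist x z + 0))) :=
    ((by fun_prop : Continuous fun ε : ℝ => (K + C * ε) * (dist x z + ε)).tendsto 0).mono_left
      nhdsWithin_le_nhds
  simpa using ge_of_tendsto hlim (eventually_mem_nhdsWithin.mono hε)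

theorem sub_le_Osc {α : Type*} {g : α → ℝ} (hba : BddAbove (Set.range g))
    (hbb : BddBelow (Set.range g)) (y z : α) : g y - g z ≤ Osc g := by
  have := le_csSup hba (Set.mem_range_self y)
  have := csInf_le hbb (Set.mem_range_self z)
  unfold Osc
  linarith

theorem QHL_of_ne_zero (g : X → ℝ) {t : ℝ} (ht : t ≠ 0) (x : X) :
    QHL g t x = ⨅ y, (g y + dist x y ^ 2 / (2 * t)) :=
  if_neg ht

theorem QHL_le {g : X → ℝ} (hbb : BddBelow (Set.range g)) {t : ℝ} (ht : 0 < t) (x y : X) :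
    QHL g t x ≤ g y + dist x y ^ 2 / (2 * t) := by
  obtain ⟨B, hB⟩ := hbb
  rw [QHL_of_ne_zero g ht.ne']
  refine ciInf_le ⟨B, ?_⟩ y
  rintro _ ⟨w, rfl⟩
  have := hB (Set.mem_range_self w)
  have : 0 ≤ dist x w ^ 2 / (2 * t) := by positivity
  linarith

theorem QHL_sub_QHL_le {g : X → ℝ} (hba : BddAbove (Set.range g))
    (hbb : BddBelow (Set.range g)) {t : ℝ} (ht : 0 < t) (x z : X) :
    QHL g t x - QHL g t z ≤
      Real.sqrt (2 * Osc g / t) * dist x z + dist x z ^ 2 / (2 * t) := by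
  set K := Real.sqrt (2 * Osc g / t)
  set d := dist x z
  have hOsc : 0 ≤ Osc g := by simpa using sub_le_Osc hba hbb z z
  have hK : (K * t) ^ 2 = 2 * t * Osc g := by
    rw [mul_pow, Real.sq_sqrt (by positivity)]
    field_simp
  suffices h : ∀ y, QHL g t x - K * d - d ^ 2 / (2 * t) ≤ g y + dist z y ^ 2 / (2 * t) by
    have : Nonempty X := ⟨x⟩
    have := le_ciInf h
    rw [← QHL_of_ne_zero g ht.ne'] at this
    linarith
  intro y
  set r := dist z y
  rcases le_or_gt r (K * t) with hr | hr
  · calc QHL g t x - K * d - d ^ 2 / (2 * t)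
        ≤ g y + dist x y ^ 2 / (2 * t) - K * d - d ^ 2 / (2 * t) := by
          linarith [QHL_le hbb ht x y]
      _ ≤ g y + (r ^ 2 + 2 * t * (K * d) + d ^ 2) / (2 * t) - K * d - d ^ 2 / (2 * t) := by
          have hxy : dist x y ≤ d + r := dist_triangle x z y
          have hdr : r * d ≤ K * t * d := mul_le_mul_of_nonneg_right hr dist_nonneg
          gcongr
          nlinarith [pow_le_pow_left₀ dist_nonneg hxy 2]
      _ = g y + r ^ 2 / (2 * t) := by field_simp; ring
  · have hfar : Osc g ≤ r ^ 2 / (2 * t) := by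
      rw [le_div_iff₀ (by positivity)]
      nlinarith [mul_self_lt_mul_self (by positivity : 0 ≤ K * t) hr]
    have := QHL_le hbb ht x z
    have := sub_le_Osc hba hbb z y
    have : 0 ≤ K * d := by positivity
    linarith

theorem statement10_general (hX : IsLengthSpace X) (g : X → ℝ)
    (hba : BddAbove (Set.range g)) (hbb : BddBelow (Set.range g))
    (t : ℝ) (ht : 0 < t) :
    LipschitzWith (Real.toNNReal (Real.sqrt (2 * Osc g / t))) (QHL g t) := by
  refine hX.lipschitzWith_of_sub_le (C := (2 * t)⁻¹) (by positivity) fun x z => ?_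
  rw [Real.coe_toNNReal _ (Real.sqrt_nonneg _), mul_comm (2 * t)⁻¹, ← div_eq_mul_inv]
  exact QHL_sub_QHL_le hba hbb ht x z

/-- For every `t > 0` the function `Q_t g` is Lipschitz with constant at most
`√(2 Osc(g) / t)`. -/
theorem statement10 (hX : IsLengthSpace X) (g : X → ℝ) (hg : LowerSemicontinuous g)
    (hba : BddAbove (Set.range g)) (hbb : BddBelow (Set.range g))
    (t : ℝ) (ht : 0 < t) :
    LipschitzWith (Real.toNNReal (Real.sqrt (2 * Osc g / t))) (QHL g t) :=
  statement10_general hX g hba hbb t ht
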